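/- arXiv:2404.07162 — 4 statements merged into one kernel-verified Lean document; each statement's English description precedes it below -/
import Mathlib

section
/- For every real θ with 0 ≤ θ < π/4, tan(θ) ≤ θ·(1 + 2θ). -/
open Real in
theorem tan_le_of_lt_pi_div_four (θ : ℝ) (h0 : 0 ≤ θ) (h1 : θ < π / 4) :
    Real.tan θ ≤ θ * (1 + 2 * θ) := by
  have hpi : π < 3.15 := Real.pi_lt_d2
  have hθ : θ < 0.79 := by linarith
  have hcos : 0 < Real.cos θ := Real.cos_pos_of_mem_Ioo ⟨by linarith [Real.pi_pos], by linarith [Real.pi_pos]⟩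
  have hsin : Real.sin θ ≤ θ := Real.sin_le h0
  have hcb : 1 - θ ^ 2 / 2 ≤ Real.cos θ := by
    nlinarith [Real.one_sub_sq_div_two_le_cos (x := θ)]
  rw [Real.tan_eq_sin_div_cos, div_le_iff₀ hcos]
  have key : θ * (1 + 2 * θ) * (1 - θ ^ 2 / 2) ≤ θ * (1 + 2 * θ) * Real.cos θ :=
    mul_le_mul_of_nonneg_left hcb (by nlinarith)
  nlinarith [mul_nonneg (mul_nonneg h0 h0) (show (0:ℝ) ≤ 2 - θ / 2 - θ ^ 2 by nlinarith)]
end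

section
/- Let v : ℝ² → ℝ be harmonic on all of ℝ² and suppose there is a constant C > 0 such that ∫_{B_R(0)} |∇v|² ≤ C·R for every R > 0. Then ∇v ≡ 0, i.e. v is constant. -/
/-
The function `v_x - i v_y = 2 ∂v/∂z` is holomorphic because `v` is harmonic, and its modulus is
`|∇v|`. The mean value property of its square bounds `|∇v|²` at a point by its average over every
disc around that point, so for every `w` and `R`
  `π R² |∇v(w)|² ≤ ∫_{B_R(w)} |∇v|² ≤ ∫_{B_{R+|w|}(0)} |∇v|² ≤ C (R + |w|)`,
and letting `R → ∞` gives `∇v(w) = 0`.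
-/

open MeasureTheory Real

noncomputable section

abbrev E2 := EuclideanSpace ℝ (Fin 2)

/-- `u` is harmonic on `s`: twice differentiable with vanishing Laplacian. -/
def IsHarmonicOn (u : E2 → ℝ) (s : Set E2) : Prop :=
  ContDiffOn ℝ 2 u s ∧ ∀ x ∈ s,
    (∑ i : Fin 2,
      fderiv ℝ (fun y => fderiv ℝ u y (EuclideanSpace.single i 1)) x
        (EuclideanSpace.single i 1)) = 0

open Metric Set InnerProductSpace Laplacian

theorem ContinuousLinearEquiv.iteratedFDeriv_comp_right {𝕜 E F G : Type*}
    [NontriviallyNormedField 𝕜] [NormedAddCommGroup E] [NormedSpace 𝕜 E] [NormedAddCommGroup F]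
    [NormedSpace 𝕜 F] [NormedAddCommGroup G] [NormedSpace 𝕜 G] (g : G ≃L[𝕜] E) (f : E → F) (x : G)
    (i : ℕ) :
    iteratedFDeriv 𝕜 i (f ∘ g) x =
      (iteratedFDeriv 𝕜 i f (g x)).compContinuousLinearMap fun _ => g := by
  simpa [← iteratedFDerivWithin_univ] using
    g.iteratedFDerivWithin_comp_right f uniqueDiffOn_univ (mem_univ (g x)) i

section Laplacian

variable {E G F : Type*} [NormedAddCommGroup E] [InnerProductSpace ℝ E] [FiniteDimensional ℝ E]
  [NormedAddCommGroup G] [InnerProductSpace ℝ G] [FiniteDimensional ℝ G]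
  [NormedAddCommGroup F] [NormedSpace ℝ F]

theorem laplacian_comp_linearIsometryEquiv (g : G ≃ₗᵢ[ℝ] E) (f : E → F) :
    Δ (f ∘ g) = Δ f ∘ g := by
  ext x
  rw [laplacian_eq_iteratedFDeriv_orthonormalBasis _ (stdOrthonormalBasis ℝ G),
    Function.comp_apply,
    laplacian_eq_iteratedFDeriv_orthonormalBasis _ ((stdOrthonormalBasis ℝ G).map g)]
  simp only [OrthonormalBasis.map_apply]
  congr 1
  ext i
  rw [show f ∘ g = f ∘ g.toContinuousLinearEquiv from rfl,
    ContinuousLinearEquiv.iteratedFDeriv_comp_right,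
    ContinuousMultilinearMap.compContinuousLinearMap_apply]
  congr 1
  ext j
  fin_cases j <;> rfl

theorem InnerProductSpace.HarmonicAt.comp_linearIsometryEquiv {f : E → F} (g : G ≃ₗᵢ[ℝ] E)
    {x : G} (hf : HarmonicAt f (g x)) : HarmonicAt (f ∘ g) x := by
  refine ⟨hf.1.comp x g.contDiff.contDiffAt, ?_⟩
  rw [laplacian_comp_linearIsometryEquiv]
  exact hf.2.comp_tendsto g.continuous.continuousAt

end Laplacian

theorem IsHarmonicOn.harmonicOnNhd {u : E2 → ℝ} {s : Set E2} (hs : IsOpen s)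
    (hu : IsHarmonicOn u s) : HarmonicOnNhd u s := by
  intro x hx
  have hdiff : ∀ y ∈ s, ContDiffAt ℝ 2 u y := fun y hy => hu.1.contDiffAt (hs.mem_nhds hy)
  refine ⟨hdiff x hx, ?_⟩
  filter_upwards [hs.mem_nhds hx] with y hy
  have h2 : DifferentiableAt ℝ (fderiv ℝ u) y :=
    ((hdiff y hy).fderiv_right (m := 1) le_rfl).differentiableAt one_ne_zero
  rw [laplacian_eq_iteratedFDeriv_orthonormalBasis _ (EuclideanSpace.basisFun (Fin 2) ℝ),
    Pi.zero_apply, ← hu.2 y hy]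
  simp [iteratedFDeriv_two_apply, fderiv_clm_apply h2 (differentiableAt_const _)]

section CircleAverage

variable {E : Type*} [NormedAddCommGroup E] [NormedSpace ℝ E]

theorem Real.norm_circleAverage_le (f : ℂ → E) (c : ℂ) (R : ℝ) :
    ‖circleAverage f c R‖ ≤ circleAverage (fun z => ‖f z‖) c R := by
  simp only [circleAverage_def, norm_smul, smul_eq_mul, norm_inv, Real.norm_eq_abs,
    abs_of_pos two_pi_pos]
  exact mul_le_mul_of_nonneg_left
    (intervalIntegral.norm_integral_le_integral_norm two_pi_pos.le) (by positivity)

theorem Real.setIntegral_Ioo_circleMap (g : ℂ → E) (c : ℂ) (r : ℝ) :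
    ∫ θ in Ioo (-π) π, g (circleMap c r θ) = (2 * π) • circleAverage g c r := by
  rw [circleAverage_eq_integral_add (-π), smul_inv_smul₀ two_pi_pos.ne',
    intervalIntegral.integral_comp_add_right (fun θ => g (circleMap c r θ)), zero_add,
    show 2 * π + -π = π by ring, intervalIntegral.integral_of_le (by linarith [pi_pos]),
    integral_Ioc_eq_integral_Ioo]

theorem integral_ball_eq_integral_circleAverage {g : ℂ → E} (hg : Continuous g) (c : ℂ) {R : ℝ}
    (hR : 0 ≤ R) :
    ∫ z in ball c R, g z = ∫ r in 0..R, (2 * π * r) • circleAverage g c r := by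
  set S : Set (ℝ × ℝ) := Ioo 0 R ×ˢ Ioo (-π) π
  set F : ℝ × ℝ → E := fun p => p.1 • g (circleMap c p.1 p.2)
  have hpolar : ∫ z in ball c R, g z = ∫ p in S, F p := by
    have hS : S ⊆ polarCoord.target := prod_mono Ioo_subset_Ioi_self Subset.rfl
    rw [← integral_indicator measurableSet_ball, ← integral_add_left_eq_self _ c,
      ← Complex.integral_comp_polarCoord_symm, ← inter_eq_right.2 hS,
      ← setIntegral_indicator (measurableSet_Ioo.prod measurableSet_Ioo)]
    refine setIntegral_congr_fun polarCoord.open_target.measurableSet fun p hp => ?_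
    rw [polarCoord_target] at hp
    have hcirc : c + Complex.polarCoord.symm p = circleMap c p.1 p.2 := by
      simp [circleMap, Complex.exp_mul_I]
    have hmem : c + Complex.polarCoord.symm p ∈ ball c R ↔ p ∈ S := by
      simp [S, hp.2, hp.1.out, abs_of_pos hp.1.out]
    by_cases h : p ∈ S
    · rw [indicator_of_mem (hmem.2 h), indicator_of_mem h, hcirc]
    · rw [indicator_of_notMem (mt hmem.1 h), indicator_of_notMem h, smul_zero]
  have hF : IntegrableOn F S := by
    refine (ContinuousOn.integrableOn_compact (isCompact_Icc (a := ((0 : ℝ), -π)) (b := (R, π)))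
      (by fun_prop)).mono_set ?_
    rw [← Icc_prod_Icc]
    exact prod_mono Ioo_subset_Icc_self Ioo_subset_Icc_self
  rw [hpolar, Measure.volume_eq_prod, setIntegral_prod _ hF, intervalIntegral.integral_of_le hR,
    integral_Ioc_eq_integral_Ioo]
  refine setIntegral_congr_fun measurableSet_Ioo fun r _ => ?_
  rw [integral_smul, setIntegral_Ioo_circleMap, smul_smul, mul_comm]

end CircleAverage

theorem Differentiable.sq_norm_le_circleAverage {f : ℂ → ℂ} (hf : Differentiable ℂ f) (c : ℂ)
    (R : ℝ) : ‖f c‖ ^ 2 ≤ circleAverage (fun z => ‖f z‖ ^ 2) c R := by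
  have hmean : circleAverage (fun z => f z ^ 2) c R = f c ^ 2 :=
    (hf.pow 2).diffContOnCl.circleAverage
  have := norm_circleAverage_le (fun z => f z ^ 2) c R
  rw [hmean] at this
  simpa only [norm_pow] using this

theorem Differentiable.pi_mul_sq_mul_sq_norm_le_integral_ball {f : ℂ → ℂ}
    (hf : Differentiable ℂ f) (c : ℂ) {R : ℝ} (hR : 0 ≤ R) :
    π * R ^ 2 * ‖f c‖ ^ 2 ≤ ∫ z in ball c R, ‖f z‖ ^ 2 := by
  have hg : Continuous fun z => ‖f z‖ ^ 2 := hf.continuous.norm.pow 2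
  rw [integral_ball_eq_integral_circleAverage hg c hR]
  calc π * R ^ 2 * ‖f c‖ ^ 2 = ∫ r in 0..R, (2 * π * r) • ‖f c‖ ^ 2 := by
        rw [intervalIntegral.integral_smul_const, intervalIntegral.integral_const_mul, integral_id,
          smul_eq_mul]
        ring
    _ ≤ ∫ r in 0..R, (2 * π * r) • circleAverage (fun z => ‖f z‖ ^ 2) c r := by
        refine intervalIntegral.integral_mono_on hR
          ((by fun_prop : Continuous _).intervalIntegrable _ _)
          ((by fun_prop : Continuous _).intervalIntegrable _ _) fun r hr => ?_
        exact smul_le_smul_of_nonneg_left (hf.sq_norm_le_circleAverage c r)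
          (by nlinarith [pi_pos, hr.1])

theorem nonpos_of_forall_sq_mul_le {a K b : ℝ} (h : ∀ R > 0, R ^ 2 * a ≤ K * (R + b)) :
    a ≤ 0 := by
  have hlim : Filter.Tendsto (fun R : ℝ => K * R⁻¹ + K * b * (R ^ 2)⁻¹) Filter.atTop
      (nhds 0) := by
    simpa using (tendsto_inv_atTop_zero.const_mul K).add
      ((tendsto_inv_atTop_zero.comp (Filter.tendsto_pow_atTop two_ne_zero)).const_mul (K * b))
  refine ge_of_tendsto hlim ?_
  filter_upwards [Filter.eventually_gt_atTop 0] with R hR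
  have := h R hR
  rw [← sub_nonneg] at this ⊢
  field_simp
  nlinarith

theorem Differentiable.eq_zero_of_integral_ball_sq_norm_le {f : ℂ → ℂ} (hf : Differentiable ℂ f)
    {C : ℝ} (hE : ∀ R > 0, ∫ z in ball 0 R, ‖f z‖ ^ 2 ≤ C * R) : f = 0 := by
  funext w
  have hint : ∀ r, IntegrableOn (fun z => ‖f z‖ ^ 2) (ball 0 r) := fun r =>
    ((hf.continuous.norm.pow 2).continuousOn.integrableOn_compact
      (isCompact_closedBall 0 r)).mono_set ball_subset_closedBall
  have hgrowth : ∀ R > 0, R ^ 2 * (π * ‖f w‖ ^ 2) ≤ C * (R + ‖w‖) := fun R hR =>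
    calc R ^ 2 * (π * ‖f w‖ ^ 2) = π * R ^ 2 * ‖f w‖ ^ 2 := by ring
      _ ≤ ∫ z in ball w R, ‖f z‖ ^ 2 := hf.pi_mul_sq_mul_sq_norm_le_integral_ball w hR.le
      _ ≤ ∫ z in ball 0 (R + ‖w‖), ‖f z‖ ^ 2 :=
        setIntegral_mono_set (hint _) (.of_forall fun _ => sq_nonneg _)
          (ball_subset_ball' (by simp)).eventuallyLE
      _ ≤ C * (R + ‖w‖) := hE _ (by positivity)
  have hnonpos : π * ‖f w‖ ^ 2 ≤ 0 := nonpos_of_forall_sq_mul_le hgrowth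
  have hsq : ‖f w‖ ^ 2 = 0 :=
    le_antisymm (nonpos_of_mul_nonpos_right hnonpos pi_pos) (sq_nonneg _)
  simpa using hsq

-- `2 ∂u/∂z`
def complexPartial (u : ℂ → ℝ) (z : ℂ) : ℂ :=
  fderiv ℝ u z 1 - Complex.I * fderiv ℝ u z Complex.I

section Plane

open Complex

theorem sq_norm_complexPartial_comp_repr (v : E2 → ℝ) (z : ℂ) :
    ‖complexPartial (v ∘ orthonormalBasisOneI.repr) z‖ ^ 2 =
      ∑ i : Fin 2, (fderiv ℝ v (orthonormalBasisOneI.repr z) (EuclideanSpace.single i 1)) ^ 2 := by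
  have h1 : orthonormalBasisOneI.repr 1 = EuclideanSpace.single 0 1 := by
    ext i; fin_cases i <;> simp
  have hI : orthonormalBasisOneI.repr I = EuclideanSpace.single 1 1 := by
    ext i; fin_cases i <;> simp
  rw [complexPartial,
    show v ∘ orthonormalBasisOneI.repr = v ∘ orthonormalBasisOneI.repr.toContinuousLinearEquiv
      from rfl,
    ContinuousLinearEquiv.comp_right_fderiv, Fin.sum_univ_two, Complex.sq_norm, normSq_apply]
  simp [h1, hI]
  ring

theorem integral_ball_sq_norm_complexPartial_comp_repr (v : E2 → ℝ) (R : ℝ) :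
    ∫ z in ball 0 R, ‖complexPartial (v ∘ orthonormalBasisOneI.repr) z‖ ^ 2 =
      ∫ x in ball (0 : E2) R, ∑ i : Fin 2, (fderiv ℝ v x (EuclideanSpace.single i 1)) ^ 2 := by
  simp_rw [sq_norm_complexPartial_comp_repr]
  rw [← orthonormalBasisOneI.repr.measurePreserving.setIntegral_preimage_emb
      orthonormalBasisOneI.repr.toHomeomorph.measurableEmbedding,
    orthonormalBasisOneI.repr.preimage_ball, map_zero]

theorem fderiv_eq_zero_of_complexPartial_comp_repr_eq_zero {v : E2 → ℝ}
    (h : complexPartial (v ∘ orthonormalBasisOneI.repr) = 0) (x : E2) : fderiv ℝ v x = 0 := by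
  have hsum := sq_norm_complexPartial_comp_repr v (orthonormalBasisOneI.repr.symm x)
  rw [h, orthonormalBasisOneI.repr.apply_symm_apply, Pi.zero_apply, norm_zero,
    zero_pow two_ne_zero] at hsum
  have hsq := (Fintype.sum_eq_zero_iff_of_nonneg fun _ => sq_nonneg _).1 hsum.symm
  refine ContinuousLinearMap.coe_injective
    ((EuclideanSpace.basisFun (Fin 2) ℝ).toBasis.ext fun i => ?_)
  simpa using congrFun hsq i

end Plane

theorem harmonic_linear_energy_growth_const_general (v : E2 → ℝ)
    (hv : IsHarmonicOn v Set.univ) (C : ℝ)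
    (hE : ∀ R > (0 : ℝ),
      (∫ x in Metric.ball (0 : E2) R,
        ∑ i : Fin 2, (fderiv ℝ v x (EuclideanSpace.single i 1)) ^ 2) ≤ C * R) :
    ∀ x : E2, fderiv ℝ v x = 0 := by
  set φ := Complex.orthonormalBasisOneI.repr
  have hu : ∀ z, HarmonicAt (v ∘ φ) z := fun z =>
    (hv.harmonicOnNhd isOpen_univ (φ z) trivial).comp_linearIsometryEquiv φ
  have hf : Differentiable ℂ (complexPartial (v ∘ φ)) := fun z =>
    HarmonicAt.differentiableAt_complex_partial (hu z)
  have hzero : complexPartial (v ∘ φ) = 0 := hf.eq_zero_of_integral_ball_sq_norm_le fun R hR =>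
    (integral_ball_sq_norm_complexPartial_comp_repr v R).trans_le (hE R hR)
  exact fderiv_eq_zero_of_complexPartial_comp_repr_eq_zero hzero

theorem harmonic_linear_energy_growth_const (v : E2 → ℝ)
    (hv : IsHarmonicOn v Set.univ) (C : ℝ) (hC : 0 < C)
    (hE : ∀ R > (0 : ℝ),
      (∫ x in Metric.ball (0 : E2) R,
        ∑ i : Fin 2, (fderiv ℝ v x (EuclideanSpace.single i 1)) ^ 2) ≤ C * R) :
    ∀ x : E2, fderiv ℝ v x = 0 :=
  harmonic_linear_energy_growth_const_general v hv C hE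

end
end

section
/- Let r > 0, let α ∈ (0, 2π/3), and let x = r(cos(α/2), sin(α/2)) and y = r(cos(α/2), −sin(α/2)) be two points on the circle of radius r centered at the origin, subtending angle α at the origin. Then there exists a point p ∈ ℝ² such that |p| + |p − x| + |p − y| < 2r. -/
/-! Put `p` on the bisector at distance `t = r (2 cos (α/2) - 1)` from the origin, which is
positive exactly because `α/2 < π/3`. Then `|p - x|² = r² - r t < (r - t/2)²`, and likewise for
`y`, so `|p| + |p - x| + |p - y| < t + 2 (r - t/2) = 2r`. -/

open Real

noncomputable section

section InnerProductSpace

variable {E : Type*} [NormedAddCommGroup E] [InnerProductSpace ℝ E]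

open scoped RealInnerProductSpace

theorem norm_smul_sub_lt_norm_sub_half {u x : E} {t : ℝ} (hu : ‖u‖ = 1)
    (ht : t = 2 * ⟪u, x⟫ - ‖x‖) (ht0 : 0 < t) : ‖t • u - x‖ < ‖x‖ - t / 2 := by
  have hux : ⟪u, x⟫ ≤ ‖x‖ := by simpa [hu] using real_inner_le_norm u x
  have hsq : ‖t • u - x‖ ^ 2 = ‖x‖ ^ 2 - t * ‖x‖ := by
    rw [norm_sub_sq_real, norm_smul, real_inner_smul_left, hu, Real.norm_of_nonneg ht0.le, ht]
    ring
  refine lt_of_pow_lt_pow_left₀ 2 (by linarith) ?_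
  nlinarith

theorem exists_norm_add_norm_sub_add_norm_sub_lt {u x y : E} {r c : ℝ} (hu : ‖u‖ = 1)
    (hx : ‖x‖ = r) (hy : ‖y‖ = r) (hux : ⟪u, x⟫ = c) (huy : ⟪u, y⟫ = c) (hrc : r < 2 * c) :
    ∃ p : E, ‖p‖ + ‖p - x‖ + ‖p - y‖ < 2 * r := by
  have ht0 : 0 < 2 * c - r := by linarith
  have hpx := norm_smul_sub_lt_norm_sub_half hu (x := x) (by rw [hux, hx]) ht0
  have hpy := norm_smul_sub_lt_norm_sub_half hu (x := y) (by rw [huy, hy]) ht0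
  refine ⟨(2 * c - r) • u, ?_⟩
  rw [norm_smul, hu, mul_one, Real.norm_of_nonneg ht0.le]
  linarith

end InnerProductSpace

theorem norm_single_zero_add_single_one (a b : ℝ) :
    ‖(EuclideanSpace.single 0 a + EuclideanSpace.single 1 b : E2)‖ = √(a ^ 2 + b ^ 2) := by
  simp [EuclideanSpace.norm_eq, Fin.sum_univ_two]

theorem fermat_torricelli_isosceles (r α : ℝ) (hr : 0 < r)
    (hα : α ∈ Set.Ioo (0 : ℝ) (2 * π / 3)) :
    ∃ p : E2,
      ‖p‖ +
        ‖p - (EuclideanSpace.single 0 (r * Real.cos (α / 2)) +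
          EuclideanSpace.single 1 (r * Real.sin (α / 2)))‖ +
        ‖p - (EuclideanSpace.single 0 (r * Real.cos (α / 2)) +
          EuclideanSpace.single 1 (-(r * Real.sin (α / 2))))‖ < 2 * r := by
  obtain ⟨hα0, hα1⟩ := hα
  have hcos : 1 / 2 < Real.cos (α / 2) := by
    rw [← Real.cos_pi_div_three]
    exact Real.cos_lt_cos_of_nonneg_of_le_pi_div_two (by linarith) (by linarith) (by linarith)
  have hnorm (s : ℝ) (hs : s ^ 2 = Real.sin (α / 2) ^ 2) :
      ‖(EuclideanSpace.single 0 (r * Real.cos (α / 2)) +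
        EuclideanSpace.single 1 (r * s) : E2)‖ = r := by
    rw [norm_single_zero_add_single_one, mul_pow, mul_pow, hs, ← mul_add,
      Real.cos_sq_add_sin_sq, mul_one, Real.sqrt_sq hr.le]
  have hinner (s : ℝ) : inner ℝ (EuclideanSpace.single 0 1 : E2)
      (EuclideanSpace.single 0 (r * Real.cos (α / 2)) + EuclideanSpace.single 1 s) =
      r * Real.cos (α / 2) := by
    simp [inner_add_right, EuclideanSpace.inner_single_left]
  have hy := hnorm (-Real.sin (α / 2)) (neg_sq _)
  rw [mul_neg] at hy
  exact exists_norm_add_norm_sub_add_norm_sub_lt (by simp) (hnorm _ rfl) hy (hinner _) (hinner _)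
    (by nlinarith)

end
end

section
/- Let f : [a,b] → ℝ be Lipschitz and let s : [a,b] → ℝ be the lower convex envelope of f, i.e. the supremum of all convex functions below f, and assume s(a) = f(a) and s(b) = f(b). Then ∫_a^b s′(t)² dt ≤ ∫_a^b f′(t)² dt. -/
/-!
Write `h = f - s ≥ 0`, which vanishes at `a` and `b`. Where `h > 0` the envelope is locally
affine (otherwise the chord of `s` over a short interval, maxed with `s`, would be a larger convex
minorant), so `s'` is locally constant there, while on the contact set `h = 0` we have `h' = 0`.
Hence `P = s' h` is Lipschitz with `P' = s' h'` a.e., so `∫ s' h' = P b - P a = 0`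
and `∫ f'² = ∫ s'² + ∫ h'² ≥ ∫ s'²`.
-/

open Set Filter Topology MeasureTheory
open scoped NNReal

def IsLowerConvexEnvelopeOn {E : Type*} [AddCommGroup E] [Module ℝ E]
    (I : Set E) (f s : E → ℝ) : Prop :=
  ∀ t ∈ I, s t =
    sSup {y : ℝ | ∃ g : E → ℝ, ConvexOn ℝ I g ∧ (∀ u ∈ I, g u ≤ f u) ∧ y = g t}

namespace IsLowerConvexEnvelopeOn

variable {E : Type*} [AddCommGroup E] [Module ℝ E] {I : Set E} {f s g : E → ℝ}

theorem le_of_convexOn (hs : IsLowerConvexEnvelopeOn I f s) (hg : ConvexOn ℝ I g)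
    (hgf : ∀ u ∈ I, g u ≤ f u) {t : E} (ht : t ∈ I) : g t ≤ s t := by
  rw [hs t ht]
  exact le_csSup ⟨f t, by rintro y ⟨g, -, hgf, rfl⟩; exact hgf t ht⟩ ⟨g, hg, hgf, rfl⟩

theorem le (hs : IsLowerConvexEnvelopeOn I f s) (hg : ConvexOn ℝ I g)
    (hgf : ∀ u ∈ I, g u ≤ f u) {t : E} (ht : t ∈ I) : s t ≤ f t := by
  rw [hs t ht]
  exact csSup_le ⟨g t, g, hg, hgf, rfl⟩ (by rintro y ⟨g, -, hgf, rfl⟩; exact hgf t ht)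

theorem convexOn (hs : IsLowerConvexEnvelopeOn I f s) (hI : Convex ℝ I) (hg : ConvexOn ℝ I g)
    (hgf : ∀ u ∈ I, g u ≤ f u) : ConvexOn ℝ I s := by
  refine ⟨hI, fun x hx y hy p q hp hq hpq => ?_⟩
  have hxy := hI hx hy hp hq hpq
  rw [hs _ hxy]
  refine csSup_le ⟨g _, g, hg, hgf, rfl⟩ ?_
  rintro z ⟨h, hh, hhf, rfl⟩
  calc h (p • x + q • y) ≤ p • h x + q • h y := hh.2 hx hy hp hq hpq
    _ ≤ p • s x + q • s y := by
      gcongr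
      · exact hs.le_of_convexOn hh hhf hx
      · exact hs.le_of_convexOn hh hhf hy

end IsLowerConvexEnvelopeOn

theorem convexOn_mul_add {I : Set ℝ} (hI : Convex ℝ I) (c d : ℝ) :
    ConvexOn ℝ I fun u => c * u + d :=
  ((LinearMap.mul ℝ ℝ c).convexOn hI).add_const d

theorem convexOn_max_cone {I : Set ℝ} (hI : Convex ℝ I) (L : ℝ≥0) (a b c d : ℝ) :
    ConvexOn ℝ I fun u => max (c - L * (u - a)) (d - L * (b - u)) := by
  refine ((convexOn_mul_add hI (-L) (c + L * a)).sup
    (convexOn_mul_add hI L (d - L * b))).congr fun u _ => ?_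
  simp only [Pi.sup_apply]
  congr 1 <;> ring

theorem lipschitzOnWith_of_forall_le {f : ℝ → ℝ} {I : Set ℝ} {K : ℝ≥0}
    (h : ∀ x ∈ I, ∀ y ∈ I, x ≤ y → |f y - f x| ≤ K * (y - x)) :
    LipschitzOnWith K f I := by
  refine LipschitzOnWith.of_dist_le_mul fun x hx y hy => ?_
  rw [Real.dist_eq, Real.dist_eq]
  rcases le_total x y with hxy | hyx
  · rw [abs_sub_comm, abs_sub_comm x, abs_of_nonneg (sub_nonneg.2 hxy)]
    exact h x hx y hy hxy
  · rw [abs_of_nonneg (sub_nonneg.2 hyx)]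
    exact h y hy x hx hyx

section Lipschitz

variable {a b : ℝ} {f s : ℝ → ℝ} {L : ℝ≥0}

theorem LipschitzOnWith.max_cone_le (hf : LipschitzOnWith L f (Icc a b)) :
    ∀ u ∈ Icc a b, max (f a - L * (u - a)) (f b - L * (b - u)) ≤ f u := by
  intro u hu
  have hab : a ≤ b := hu.1.trans hu.2
  have h₁ := hf.dist_le_mul u hu a (left_mem_Icc.2 hab)
  have h₂ := hf.dist_le_mul u hu b (right_mem_Icc.2 hab)
  rw [Real.dist_eq, Real.dist_eq, abs_of_nonneg (sub_nonneg.2 hu.1)] at h₁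
  rw [Real.dist_eq, Real.dist_eq, abs_of_nonpos (sub_nonpos.2 hu.2)] at h₂
  have := neg_abs_le (f u - f a)
  have := neg_abs_le (f u - f b)
  exact max_le (by linarith) (by linarith)

theorem ConvexOn.lipschitzOnWith_of_max_cone_le (hs : ConvexOn ℝ (Icc a b) s)
    (hcone : ∀ u ∈ Icc a b, max (s a - L * (u - a)) (s b - L * (b - u)) ≤ s u) :
    LipschitzOnWith L s (Icc a b) := by
  refine lipschitzOnWith_of_forall_le fun x hx y hy hxy => ?_
  rcases hxy.eq_or_lt with rfl | hxy
  · simp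
  have hab : a ≤ b := hx.1.trans hx.2
  have hxb : x < b := hxy.trans_le hy.2
  have hay : a < y := hx.1.trans_lt hxy
  have upper : (s y - s x) / (y - x) ≤ L := by
    calc (s y - s x) / (y - x) ≤ (s b - s x) / (b - x) :=
          hs.secant_mono hx hy (right_mem_Icc.2 hab) hxy.ne' hxb.ne' hy.2
      _ ≤ L := by
          rw [div_le_iff₀ (sub_pos.2 hxb)]
          linarith [le_max_right (s a - L * (x - a)) (s b - L * (b - x)), hcone x hx]
  have lower : -(L : ℝ) ≤ (s x - s y) / (x - y) := by
    calc -(L : ℝ) ≤ (s a - s y) / (a - y) := by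
          rw [le_div_iff_of_neg (sub_neg.2 hay)]
          linarith [le_max_left (s a - L * (y - a)) (s b - L * (b - y)), hcone y hy]
      _ ≤ (s x - s y) / (x - y) :=
          hs.secant_mono hy (left_mem_Icc.2 hab) hx hay.ne hxy.ne hx.1
  rw [div_le_iff₀ (sub_pos.2 hxy)] at upper
  rw [le_div_iff_of_neg (sub_neg.2 hxy)] at lower
  rw [abs_le]
  constructor <;> linarith

theorem IsLowerConvexEnvelopeOn.lipschitzOnWith (hs : IsLowerConvexEnvelopeOn (Icc a b) f s)
    (hf : LipschitzOnWith L f (Icc a b)) (hsa : s a = f a) (hsb : s b = f b) :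
    LipschitzOnWith L s (Icc a b) := by
  have hcone := convexOn_max_cone (convex_Icc a b) L a b (f a) (f b)
  refine (hs.convexOn (convex_Icc a b) hcone hf.max_cone_le).lipschitzOnWith_of_max_cone_le
    fun u hu => ?_
  rw [hsa, hsb]
  exact hs.le_of_convexOn hcone hf.max_cone_le hu

end Lipschitz

section Secant

variable {I : Set ℝ} {s : ℝ → ℝ} {x y u : ℝ}

theorem ConvexOn.le_secant (hs : ConvexOn ℝ I s) (hx : x ∈ I) (hy : y ∈ I) (hxy : x < y)
    (hu : u ∈ Icc x y) : s u ≤ s x + slope s x y * (u - x) := by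
  rcases hu.1.eq_or_lt with rfl | hxu
  · simp
  have hmono : slope s x u ≤ slope s x y :=
    hs.slope_mono hx ⟨hs.1.ordConnected.out hx hy ⟨hxu.le, hu.2⟩, hxu.ne'⟩ ⟨hy, hxy.ne'⟩
      hu.2
  have := mul_le_mul_of_nonneg_left hmono (sub_nonneg.2 hxu.le)
  rw [← smul_eq_mul, sub_smul_slope, vsub_eq_sub] at this
  linarith

theorem ConvexOn.secant_le (hs : ConvexOn ℝ I s) (hx : x ∈ I) (hy : y ∈ I) (hxy : x < y)
    (hu : u ∈ I) (hu' : u ∉ Ioo x y) : s x + slope s x y * (u - x) ≤ s u := by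
  rcases lt_trichotomy u x with hux | rfl | hxu
  · have hmono : slope s x u ≤ slope s x y :=
      hs.slope_mono hx ⟨hu, hux.ne⟩ ⟨hy, hxy.ne'⟩ (hux.trans hxy).le
    have := mul_le_mul_of_nonpos_left hmono (sub_nonpos.2 hux.le)
    rw [← smul_eq_mul (u - x) (slope s x u), sub_smul_slope, vsub_eq_sub] at this
    linarith
  · simp
  · have hyu : y ≤ u := not_lt.1 fun h => hu' ⟨hxu, h⟩
    have hmono : slope s x y ≤ slope s x u :=
      hs.slope_mono hx ⟨hy, hxy.ne'⟩ ⟨hu, hxu.ne'⟩ hyu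
    have := mul_le_mul_of_nonneg_left hmono (sub_nonneg.2 hxu.le)
    rw [← smul_eq_mul (u - x) (slope s x u), sub_smul_slope, vsub_eq_sub] at this
    linarith

end Secant

theorem IsLowerConvexEnvelopeOn.eventually_eq_affine {I : Set ℝ} {f s g : ℝ → ℝ}
    (hs : IsLowerConvexEnvelopeOn I f s) (hI : Convex ℝ I) (hg : ConvexOn ℝ I g)
    (hgf : ∀ u ∈ I, g u ≤ f u) {t : ℝ} (ht : I ∈ 𝓝 t) (hst : ContinuousAt s t)
    (hft : ContinuousAt f t) (hlt : s t < f t) :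
    ∃ c d : ℝ, ∀ᶠ u in 𝓝 t, s u = c * u + d := by
  obtain ⟨m, hsm, hmf⟩ := exists_between hlt
  have hgood : ∀ᶠ u in 𝓝 t, u ∈ I ∧ s u < m ∧ m < f u := Filter.Eventually.and ht
    ((hst.eventually (eventually_lt_nhds hsm)).and (hft.eventually (eventually_gt_nhds hmf)))
  obtain ⟨l, r, ⟨hlt, htr⟩, hlr⟩ := mem_nhds_iff_exists_Ioo_subset.1 hgood
  obtain ⟨x, hlx, hxt⟩ := exists_between hlt
  obtain ⟨y, hty, hyr⟩ := exists_between htr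
  have hxy : x < y := hxt.trans hty
  have hgood' : ∀ u ∈ Icc x y, u ∈ I ∧ s u < m ∧ m < f u := fun u hu =>
    hlr ⟨hlx.trans_le hu.1, hu.2.trans_lt hyr⟩
  obtain ⟨hx, hsxm, -⟩ := hgood' x (left_mem_Icc.2 hxy.le)
  obtain ⟨hy, hsym, -⟩ := hgood' y (right_mem_Icc.2 hxy.le)
  have hsI := hs.convexOn hI hg hgf
  set c := slope s x y
  have hℓ : ConvexOn ℝ I fun u => c * u + (s x - c * x) := convexOn_mul_add hI _ _
  have hℓs : ∀ u ∈ I, u ∉ Ioo x y → c * u + (s x - c * x) ≤ s u := fun u hu hu' => by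
    linarith [hsI.secant_le hx hy hxy hu hu']
  have hℓf : ∀ u ∈ I, c * u + (s x - c * x) ≤ f u := by
    intro u hu
    by_cases hu' : u ∈ Ioo x y
    · have hmax :=
        hℓ.le_on_segment hx hy ((segment_eq_Icc hxy.le).symm ▸ Ioo_subset_Icc_self hu')
      have hℓy := hℓs y hy fun h => h.2.false
      refine hmax.trans (le_of_lt ?_)
      exact (max_lt (by linarith) (by linarith)).trans (hgood' u (Ioo_subset_Icc_self hu')).2.2
    · exact (hℓs u hu hu').trans (hs.le hg hgf hu)
  have hℓs' : ∀ u ∈ I, c * u + (s x - c * x) ≤ s u := fun u hu =>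
    (le_max_right _ _).trans (hs.le_of_convexOn (hsI.sup hℓ)
      (fun v hv => max_le (hs.le hg hgf hv) (hℓf v hv)) hu)
  refine ⟨c, s x - c * x, ?_⟩
  filter_upwards [Ioo_mem_nhds hxt hty] with u hu
  refine le_antisymm ?_ (hℓs' u (hgood' u (Ioo_subset_Icc_self hu)).1)
  linarith [hsI.le_secant hx hy hxy (Ioo_subset_Icc_self hu)]

theorem eventually_deriv_eq_of_eventually_eq_affine {s : ℝ → ℝ} {t c d : ℝ}
    (h : ∀ᶠ u in 𝓝 t, s u = c * u + d) : ∀ᶠ u in 𝓝 t, deriv s u = deriv s t := by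
  have hc : ∀ᶠ u in 𝓝 t, deriv s u = c :=
    h.eventually_nhds.mono fun u hu => (EventuallyEq.deriv_eq hu).trans (by simp)
  exact hc.mono fun u hu => hu.trans hc.self_of_nhds.symm

theorem eqOn_Icc_of_eventually_eq {φ : ℝ → ℝ} {x y : ℝ}
    (h : ∀ t ∈ Icc x y, ∀ᶠ u in 𝓝 t, φ u = φ t) : ∀ t ∈ Icc x y, φ t = φ x := by
  have hd : ∀ t ∈ Icc x y, HasDerivAt φ 0 t := fun t ht =>
    (hasDerivAt_const t (φ t)).congr_of_eventuallyEq (h t ht)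
  exact constant_of_has_deriv_right_zero (fun t ht => (hd t ht).continuousAt.continuousWithinAt)
    fun t ht => (hd t (Ico_subset_Icc_self ht)).hasDerivWithinAt

theorem hasDerivAt_zero_of_abs_le_mul_abs {φ h : ℝ → ℝ} {t C : ℝ} (hh : HasDerivAt h 0 t)
    (hht : h t = 0) (hφ : ∀ᶠ u in 𝓝 t, |φ u| ≤ C * |h u|) : HasDerivAt φ 0 t := by
  have hφt : φ t = 0 := abs_nonpos_iff.1 (by simpa [hht] using hφ.self_of_nhds)
  rw [hasDerivAt_iff_isLittleO] at hh ⊢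
  simp only [hφt, hht, sub_zero, smul_zero] at hh ⊢
  exact (Asymptotics.IsBigO.of_bound C hφ).trans_isLittleO hh

theorem LipschitzOnWith.intervalIntegrable_deriv_mul {a b : ℝ} {L : ℝ≥0} {f g : ℝ → ℝ}
    (hf : LipschitzOnWith L f (uIcc a b)) (hg : IntervalIntegrable g volume a b) :
    IntervalIntegrable (fun t => deriv f t * g t) volume a b := by
  rw [intervalIntegrable_iff] at hg ⊢
  refine hg.bdd_mul (c := L) (measurable_deriv f).aestronglyMeasurable ?_
  rw [ae_restrict_iff' measurableSet_uIoc]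
  filter_upwards [Measure.ae_ne volume (a ⊔ b)] with t htb ht
  exact norm_deriv_le_of_lipschitzOn
    (mem_of_superset (Ioo_mem_nhds ht.1 (ht.2.lt_of_ne htb)) Ioo_subset_Icc_self) hf

section Energy

variable {a b : ℝ} {f s : ℝ → ℝ} {K L : ℝ≥0}

theorem abs_deriv_mul_sub_le (hs : LipschitzOnWith K s (Icc a b)) (hsa : s a = f a)
    (hsb : s b = f b) {t : ℝ} (ht : t ∈ Icc a b) :
    |deriv s t * (f t - s t)| ≤ K * |f t - s t| := by
  rw [abs_mul]
  rcases eq_endpoints_or_mem_Ioo_of_mem_Icc ht with rfl | rfl | ht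
  · simp [hsa]
  · simp [hsb]
  · gcongr
    exact norm_deriv_le_of_lipschitzOn (Icc_mem_nhds ht.1 ht.2) hs

theorem lipschitzOnWith_deriv_mul_sub (hf : LipschitzOnWith L f (Icc a b))
    (hs : LipschitzOnWith K s (Icc a b)) (hsf : ∀ t ∈ Icc a b, s t ≤ f t)
    (hsa : s a = f a) (hsb : s b = f b)
    (hloc : ∀ t ∈ Ioo a b, s t < f t → ∀ᶠ u in 𝓝 t, deriv s u = deriv s t) :
    LipschitzOnWith (K * (L + K)) (fun t => deriv s t * (f t - s t)) (Icc a b) := by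
  have hh : LipschitzOnWith (L + K) (fun t => f t - s t) (Icc a b) := hf.sub hs
  have hdist : ∀ x ∈ Icc a b, ∀ y ∈ Icc a b, x ≤ y →
      |(f y - s y) - (f x - s x)| ≤ (L + K) * (y - x) := fun x hx y hy hxy => by
    have := hh.dist_le_mul y hy x hx
    rwa [Real.dist_eq, Real.dist_eq, abs_of_nonneg (sub_nonneg.2 hxy)] at this
  refine lipschitzOnWith_of_forall_le fun x hx y hy hxy => ?_
  by_cases hcontact : ∃ z ∈ Icc x y, s z = f z
  · obtain ⟨z, hz, hsz⟩ := hcontact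
    have hzI : z ∈ Icc a b := ⟨hx.1.trans hz.1, hz.2.trans hy.2⟩
    have hxz := hdist x hx z hzI hz.1
    have hzy := hdist z hzI y hy hz.2
    rw [hsz, sub_self, zero_sub, abs_neg] at hxz
    rw [hsz, sub_self, sub_zero] at hzy
    calc |deriv s y * (f y - s y) - deriv s x * (f x - s x)|
        ≤ |deriv s y * (f y - s y)| + |deriv s x * (f x - s x)| := abs_sub _ _
      _ ≤ K * |f y - s y| + K * |f x - s x| :=
          add_le_add (abs_deriv_mul_sub_le hs hsa hsb hy) (abs_deriv_mul_sub_le hs hsa hsb hx)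
      _ ≤ K * ((L + K) * (y - z)) + K * ((L + K) * (z - x)) := by gcongr
      _ = ↑(K * (L + K)) * (y - x) := by push_cast; ring
  · push Not at hcontact
    have hgap : ∀ z ∈ Icc x y, z ∈ Ioo a b ∧ s z < f z := fun z hz => by
      have hzI : z ∈ Icc a b := ⟨hx.1.trans hz.1, hz.2.trans hy.2⟩
      refine ⟨⟨hzI.1.lt_of_ne ?_, hzI.2.lt_of_ne ?_⟩, (hsf z hzI).lt_of_ne (hcontact z hz)⟩
      · rintro rfl; exact hcontact _ hz hsa
      · rintro rfl; exact hcontact _ hz hsb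
    have hconst := eqOn_Icc_of_eventually_eq fun z hz => hloc z (hgap z hz).1 (hgap z hz).2
    have hxI := (hgap x (left_mem_Icc.2 hxy)).1
    rw [hconst y (right_mem_Icc.2 hxy), ← mul_sub, abs_mul, NNReal.coe_mul, mul_assoc]
    exact mul_le_mul (norm_deriv_le_of_lipschitzOn (Icc_mem_nhds hxI.1 hxI.2) hs)
      (hdist x hx y hy hxy) (abs_nonneg _) K.2

theorem hasDerivAt_deriv_mul_sub (hs : LipschitzOnWith K s (Icc a b))
    (hsf : ∀ t ∈ Icc a b, s t ≤ f t) (hsa : s a = f a) (hsb : s b = f b)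
    (hloc : ∀ t ∈ Ioo a b, s t < f t → ∀ᶠ u in 𝓝 t, deriv s u = deriv s t)
    {t : ℝ} (ht : t ∈ Ioo a b) (hft : DifferentiableAt ℝ f t)
    (hst : DifferentiableAt ℝ s t) :
    HasDerivAt (fun u => deriv s u * (f u - s u)) (deriv s t * (deriv f t - deriv s t)) t := by
  have hI : Icc a b ∈ 𝓝 t := Icc_mem_nhds ht.1 ht.2
  have hh : HasDerivAt (fun u => f u - s u) (deriv f t - deriv s t) t :=
    hft.hasDerivAt.sub hst.hasDerivAt
  rcases (hsf t (Ioo_subset_Icc_self ht)).lt_or_eq with hlt | heq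
  · exact (hh.const_mul (deriv s t)).congr_of_eventuallyEq
      ((hloc t ht hlt).mono fun u hu => by simp only [hu])
  · have hmin : IsLocalMin (fun u => f u - s u) t :=
      mem_of_superset hI fun u hu => by simp [heq, hsf u hu]
    have h0 := hmin.hasDerivAt_eq_zero hh
    rw [h0, mul_zero]
    refine hasDerivAt_zero_of_abs_le_mul_abs (C := K) (h0 ▸ hh) (by simp [heq]) ?_
    filter_upwards [hI] with u hu using abs_deriv_mul_sub_le hs hsa hsb hu

theorem integral_deriv_mul_deriv_sub_eq_zero (hab : a ≤ b) (hf : LipschitzOnWith L f (Icc a b))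
    (hs : LipschitzOnWith K s (Icc a b)) (hsf : ∀ t ∈ Icc a b, s t ≤ f t)
    (hsa : s a = f a) (hsb : s b = f b)
    (hloc : ∀ t ∈ Ioo a b, s t < f t → ∀ᶠ u in 𝓝 t, deriv s u = deriv s t) :
    ∫ t in a..b, deriv s t * (deriv f t - deriv s t) = 0 := by
  have hI : uIcc a b = Icc a b := uIcc_of_le hab
  have hP := lipschitzOnWith_deriv_mul_sub hf hs hsf hsa hsb hloc
  rw [← hI] at hP hf
  have hs' : LipschitzOnWith K s (uIcc a b) := hI ▸ hs
  have hFTC := hP.absolutelyContinuousOnInterval.integral_deriv_eq_sub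
  simp only [hsa, hsb, sub_self, mul_zero] at hFTC
  rw [← hFTC]
  refine intervalIntegral.integral_congr_ae ?_
  filter_upwards [hf.absolutelyContinuousOnInterval.ae_differentiableAt,
    hs'.absolutelyContinuousOnInterval.ae_differentiableAt, Measure.ae_ne volume b]
    with t hft hst htb ht
  have htI := uIoc_subset_uIcc ht
  rw [uIoc_of_le hab] at ht
  exact (hasDerivAt_deriv_mul_sub hs hsf hsa hsb hloc ⟨ht.1, ht.2.lt_of_ne htb⟩
    (hft htI) (hst htI)).deriv.symm

theorem integral_deriv_sq_le_of_eventually_deriv_eq (hab : a ≤ b)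
    (hf : LipschitzOnWith L f (Icc a b)) (hs : LipschitzOnWith K s (Icc a b))
    (hsf : ∀ t ∈ Icc a b, s t ≤ f t) (hsa : s a = f a) (hsb : s b = f b)
    (hloc : ∀ t ∈ Ioo a b, s t < f t → ∀ᶠ u in 𝓝 t, deriv s u = deriv s t) :
    ∫ t in a..b, deriv s t ^ 2 ≤ ∫ t in a..b, deriv f t ^ 2 := by
  have hcross := integral_deriv_mul_deriv_sub_eq_zero hab hf hs hsf hsa hsb hloc
  rw [← uIcc_of_le hab] at hf hs
  have hf' := hf.absolutelyContinuousOnInterval.intervalIntegrable_deriv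
  have hs' := hs.absolutelyContinuousOnInterval.intervalIntegrable_deriv
  have hss : IntervalIntegrable (fun t => deriv s t ^ 2) volume a b := by
    simpa only [sq] using hs.intervalIntegrable_deriv_mul hs'
  have hff : IntervalIntegrable (fun t => deriv f t ^ 2) volume a b := by
    simpa only [sq] using hf.intervalIntegrable_deriv_mul hf'
  have hsfs := (hs.intervalIntegrable_deriv_mul (hf'.sub hs')).const_mul 2
  calc ∫ t in a..b, deriv s t ^ 2
      = ∫ t in a..b, deriv s t ^ 2 + 2 * (deriv s t * (deriv f t - deriv s t)) := by
        rw [intervalIntegral.integral_add hss hsfs, intervalIntegral.integral_const_mul, hcross,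
          mul_zero, add_zero]
    _ ≤ ∫ t in a..b, deriv f t ^ 2 :=
        intervalIntegral.integral_mono_on hab (hss.add hsfs) hff fun t _ => by
          nlinarith [sq_nonneg (deriv f t - deriv s t)]

end Energy

open MeasureTheory in
theorem convex_envelope_energy_le (a b : ℝ) (hab : a < b) (f s : ℝ → ℝ) (L : NNReal)
    (hf : LipschitzOnWith L f (Set.Icc a b))
    (hs : ∀ t ∈ Set.Icc a b,
      s t = sSup {y : ℝ | ∃ g : ℝ → ℝ, ConvexOn ℝ (Set.Icc a b) g ∧
        (∀ u ∈ Set.Icc a b, g u ≤ f u) ∧ y = g t})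
    (hsa : s a = f a) (hsb : s b = f b) :
    (∫ t in a..b, (deriv s t) ^ 2) ≤ ∫ t in a..b, (deriv f t) ^ 2 := by
  have hs : IsLowerConvexEnvelopeOn (Icc a b) f s := hs
  have hcone := convexOn_max_cone (convex_Icc a b) L a b (f a) (f b)
  have hsL := hs.lipschitzOnWith hf hsa hsb
  refine integral_deriv_sq_le_of_eventually_deriv_eq hab.le hf hsL
    (fun t => hs.le hcone hf.max_cone_le) hsa hsb fun t ht hlt => ?_
  have hI : Icc a b ∈ 𝓝 t := Icc_mem_nhds ht.1 ht.2
  obtain ⟨c, d, hcd⟩ := hs.eventually_eq_affine (convex_Icc a b) hcone hf.max_cone_le hI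
    (hsL.continuousOn.continuousAt hI) (hf.continuousOn.continuousAt hI) hlt
  exact eventually_deriv_eq_of_eventually_eq_affine hcd
end
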